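/- arXiv:2605.16378 — 2 statements merged into one kernel-verified Lean document; each statement's English description precedes it below -/
import Mathlib

section
/- For all sites i ≠ j and all τ > 0, the influence coefficient is bounded by the cross-site score oscillation: c_{ij}(τ) ≤ Δ_{ij}/(4τ). -/
open Finset

/-- Temperature-scaled conditionals induced by local scores `s`:
`p_{θ,τ}(a | x_{-i}) = exp(s_i(a; x_{-i})/τ) / Σ_b exp(s_i(b; x_{-i})/τ)`. -/
noncomputable def pTau {V : Type*} [Fintype V] {n : ℕ}
    (s : Fin n → (Fin n → V) → V → ℝ) (τ : ℝ)
    (i : Fin n) (x : Fin n → V) (a : V) : ℝ :=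
  Real.exp (s i x a / τ) / ∑ b : V, Real.exp (s i x b / τ)

/-- Total variation distance between two functions on a finite set. -/
noncomputable def tvDist {V : Type*} [Fintype V] (ν ν' : V → ℝ) : ℝ :=
  (1 / 2) * ∑ a : V, |ν a - ν' a|

/-- The influence coefficient
`c_{ij}(τ) = sup { ‖p_{θ,τ}(·|x_{-i}) − p_{θ,τ}(·|y_{-i})‖_TV : x_k = y_k ∀ k ≠ j }`. -/
noncomputable def influenceCoeff {V : Type*} [Fintype V] {n : ℕ}
    (s : Fin n → (Fin n → V) → V → ℝ) (τ : ℝ) (i j : Fin n) : ℝ :=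
  sSup {d : ℝ | ∃ x y : Fin n → V, (∀ k, k ≠ j → x k = y k) ∧
    d = tvDist (pTau s τ i x) (pTau s τ i y)}

/-- The cross-site score oscillation
`Δ_{ij} = sup { max_a (s_i(a;x_{-i}) − s_i(a;y_{-i})) − min_a (s_i(a;x_{-i}) − s_i(a;y_{-i}))
: x_k = y_k ∀ k ≠ j }`. -/
noncomputable def scoreOscillation {V : Type*} [Fintype V] [Nonempty V] {n : ℕ}
    (s : Fin n → (Fin n → V) → V → ℝ) (i j : Fin n) : ℝ :=
  sSup {d : ℝ | ∃ x y : Fin n → V, (∀ k, k ≠ j → x k = y k) ∧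
    d = (Finset.univ.sup' Finset.univ_nonempty fun a => s i x a - s i y a) -
        (Finset.univ.inf' Finset.univ_nonempty fun a => s i x a - s i y a)}

/-!
Write `p = softmax (s_i(·; x)/τ)` and `q = softmax (s_i(·; y)/τ)`. The likelihood ratio `p / q` is
`exp` of the score difference up to a normalising constant, so it ranges over an interval
`[α, β]` with `log (β / α) = Δ / τ`, and `α ≤ 1 ≤ β` because both vectors have mass one. Then
`‖p - q‖_TV = Σ q (p / q - 1)⁺`, and bounding the convex function `(w - 1)⁺` on `[α, β]` by its
chord gives `‖p - q‖_TV ≤ (β - 1)(1 - α) / (β - α)`. By AM-GM and `tanh x ≤ x` this is at most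
`log (β / α) / 4`. Taking suprema over the pairs `x, y` finishes the proof.
-/

open Real

/-- `tanh (t / 2) ≤ t / 2`, written with exponentials. -/
lemma Real.exp_sub_one_le_mul_exp_add_one {t : ℝ} (ht : 0 ≤ t) :
    exp t - 1 ≤ t / 2 * (exp t + 1) := by
  let f : ℝ → ℝ := fun t => t / 2 * (exp t + 1) - (exp t - 1)
  have hf : ∀ t, HasDerivAt f ((1 - exp t * (1 - t)) / 2) t := fun t => by
    refine ((((hasDerivAt_id' t).div_const 2).mul ((hasDerivAt_exp t).add_const 1)).sub
      ((hasDerivAt_exp t).sub_const 1)).congr_deriv ?_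
    ring
  have hf_nonneg : ∀ t, 0 ≤ (1 - exp t * (1 - t)) / 2 := fun t => by
    have h := mul_le_mul_of_nonneg_left (by linarith [add_one_le_exp (-t)] : 1 - t ≤ exp (-t))
      (exp_pos t).le
    rw [← exp_add, add_neg_cancel, exp_zero] at h
    linarith
  have hmono : Monotone f :=
    monotone_of_deriv_nonneg (fun t => (hf t).differentiableAt) fun t => (hf t).deriv ▸ hf_nonneg t
  simpa [f] using hmono ht

lemma Real.sub_one_mul_one_sub_le_log_div_mul {α β : ℝ} (hα : 0 < α) (hα1 : α ≤ 1) (h1β : 1 ≤ β) :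
    (β - 1) * (1 - α) ≤ log (β / α) / 4 * (β - α) := by
  set G := √(β / α)
  have hG1 : 1 ≤ G := one_le_sqrt.2 ((one_le_div hα).2 (hα1.trans h1β))
  have hG2 : G ^ 2 = β / α := sq_sqrt (div_pos (hα.trans_le (hα1.trans h1β)) hα).le
  have hβ : β = α * G ^ 2 := by rw [hG2, mul_div_cancel₀ _ hα.ne']
  have hlog : log (β / α) = 2 * log G := by rw [← hG2, log_pow, Nat.cast_ofNat]
  have htanh : G - 1 ≤ log G / 2 * (G + 1) := by
    simpa [exp_log (zero_lt_one.trans_le hG1)] using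
      exp_sub_one_le_mul_exp_add_one (log_nonneg hG1)
  -- AM-GM: the gap is `(α * G - 1) ^ 2`, because `α * β = (α * G) ^ 2`
  calc (β - 1) * (1 - α) ≤ α * (G - 1) * (G - 1) := by nlinarith [sq_nonneg (α * G - 1)]
    _ ≤ α * (G - 1) * (log G / 2 * (G + 1)) :=
        mul_le_mul_of_nonneg_left htanh (mul_nonneg hα.le (by linarith))
    _ = log (β / α) / 4 * (β - α) := by rw [hlog, hβ]; ring

lemma tvDist_eq_sum_posPart {ι : Type*} [Fintype ι] {p q : ι → ℝ}
    (h : ∑ a, p a = ∑ a, q a) : tvDist p q = ∑ a, (p a - q a)⁺ := by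
  have habs : ∀ a, |p a - q a| = 2 * (p a - q a)⁺ - (p a - q a) := fun a => by
    rw [eq_sub_iff_add_eq, abs_add_eq_two_nsmul_posPart, two_nsmul, two_mul]
  rw [tvDist, sum_congr rfl fun a _ => habs a, sum_sub_distrib,
    sum_sub_distrib, h, ← mul_sum]
  ring

lemma tvDist_le_log_div_of_ratio_mem_Icc {ι : Type*} [Fintype ι] {p q : ι → ℝ} {α β : ℝ}
    (hp : ∑ a, p a = 1) (hq : ∑ a, q a = 1) (hα : 0 < α)
    (hαp : ∀ a, α * q a ≤ p a) (hpβ : ∀ a, p a ≤ β * q a) :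
    tvDist p q ≤ log (β / α) / 4 := by
  have hα1 : α ≤ 1 := by
    simpa [← mul_sum, hp, hq] using sum_le_sum (s := univ) fun a _ => hαp a
  have h1β : 1 ≤ β := by
    simpa [← mul_sum, hp, hq] using sum_le_sum (s := univ) fun a _ => hpβ a
  rw [tvDist_eq_sum_posPart (hp.trans hq.symm)]
  rcases (hα1.trans h1β).lt_or_eq with hαβ | hαβ
  · -- `(w - 1)⁺` lies below its chord through `(α, 0)` and `(β, β - 1)`
    have hchord : ∀ a, (β - α) * (p a - q a)⁺ ≤ (β - 1) * (p a - α * q a) := fun a => by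
      rcases le_total (p a) (q a) with hpq | hqp
      · rw [posPart_of_nonpos (sub_nonpos.2 hpq), mul_zero]
        exact mul_nonneg (by linarith) (by linarith [hαp a])
      · rw [posPart_eq_self.2 (sub_nonneg.2 hqp)]
        nlinarith [mul_le_mul_of_nonneg_left (hpβ a) (sub_nonneg.2 hα1)]
    refine le_of_mul_le_mul_left ?_ (sub_pos.2 hαβ)
    calc (β - α) * ∑ a, (p a - q a)⁺ = ∑ a, (β - α) * (p a - q a)⁺ := mul_sum _ _ _
      _ ≤ ∑ a, (β - 1) * (p a - α * q a) := sum_le_sum fun a _ => hchord a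
      _ = (β - 1) * (1 - α) := by
        rw [← mul_sum, sum_sub_distrib, ← mul_sum, hp, hq, mul_one]
      _ ≤ log (β / α) / 4 * (β - α) := sub_one_mul_one_sub_le_log_div_mul hα hα1 h1β
      _ = (β - α) * (log (β / α) / 4) := mul_comm _ _
  · obtain ⟨rfl, rfl⟩ : α = 1 ∧ β = 1 := ⟨by linarith, by linarith⟩
    have hpq : ∀ a, (p a - q a)⁺ = 0 := fun a =>
      posPart_of_nonpos (by linarith [hpβ a])
    simp [hpq]

section Softmax

variable {V : Type*} [Fintype V]

noncomputable def softmax (u : V → ℝ) (a : V) : ℝ :=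
  exp (u a) / ∑ b, exp (u b)

lemma softmax_nonneg (u : V → ℝ) (a : V) : 0 ≤ softmax u a := by
  unfold softmax
  positivity

lemma sum_softmax [Nonempty V] (u : V → ℝ) : ∑ a, softmax u a = 1 := by
  simp only [softmax, ← sum_div]
  exact div_self (sum_pos (fun b _ => exp_pos (u b)) univ_nonempty).ne'

lemma softmax_eq_exp_sub_mul_softmax [Nonempty V] (u v : V → ℝ) (a : V) :
    softmax u a = exp (u a - v a) * ((∑ b, exp (v b)) / ∑ b, exp (u b)) * softmax v a := by
  have hv : 0 < ∑ b, exp (v b) := sum_pos (fun b _ => exp_pos (v b)) univ_nonempty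
  have hu : 0 < ∑ b, exp (u b) := sum_pos (fun b _ => exp_pos (u b)) univ_nonempty
  simp only [softmax, exp_sub]
  field_simp

noncomputable def spread [Nonempty V] (h : V → ℝ) : ℝ :=
  univ.sup' univ_nonempty h - univ.inf' univ_nonempty h

lemma spread_div [Nonempty V] (h : V → ℝ) {τ : ℝ} (hτ : 0 < τ) :
    spread (fun a => h a / τ) = spread h / τ := by
  have hsup := map_finset_sup' (OrderIso.divRight₀ τ hτ) univ_nonempty h
  have hinf := map_finset_inf' (OrderIso.divRight₀ τ hτ) univ_nonempty h
  simp only [OrderIso.divRight₀_apply] at hsup hinf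
  simp only [spread, sub_div, hsup, hinf]
  rfl

lemma tvDist_softmax_le [Nonempty V] (u v : V → ℝ) :
    tvDist (softmax u) (softmax v) ≤ spread (fun a => u a - v a) / 4 := by
  set κ := (∑ b, exp (v b)) / ∑ b, exp (u b)
  have hκ : 0 < κ := div_pos (sum_pos (fun b _ => exp_pos (v b)) univ_nonempty)
    (sum_pos (fun b _ => exp_pos (u b)) univ_nonempty)
  set M := univ.sup' univ_nonempty fun a => u a - v a
  set m := univ.inf' univ_nonempty fun a => u a - v a
  have hratio : log (exp M * κ / (exp m * κ)) = spread (fun a => u a - v a) := by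
    rw [mul_div_mul_right _ _ hκ.ne', ← exp_sub, log_exp]
    rfl
  rw [← hratio]
  refine tvDist_le_log_div_of_ratio_mem_Icc (sum_softmax u) (sum_softmax v)
    (mul_pos (exp_pos m) hκ) (fun a => ?_) (fun a => ?_)
  · rw [softmax_eq_exp_sub_mul_softmax u v a]
    gcongr
    exacts [softmax_nonneg v a, inf'_le _ (mem_univ a)]
  · rw [softmax_eq_exp_sub_mul_softmax u v a]
    gcongr
    exacts [softmax_nonneg v a, le_sup' (fun a => u a - v a) (mem_univ a)]

lemma pTau_eq_softmax {n : ℕ} (s : Fin n → (Fin n → V) → V → ℝ)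
    (τ : ℝ) (i : Fin n) (x : Fin n → V) : pTau s τ i x = softmax fun a => s i x a / τ :=
  rfl

lemma tvDist_pTau_le [Nonempty V] {n : ℕ}
    (s : Fin n → (Fin n → V) → V → ℝ) {τ : ℝ} (hτ : 0 < τ) (i : Fin n) (x y : Fin n → V) :
    tvDist (pTau s τ i x) (pTau s τ i y) ≤ spread (fun a => s i x a - s i y a) / (4 * τ) := by
  have h := tvDist_softmax_le (fun a => s i x a / τ) (fun a => s i y a / τ)
  simp only [← sub_div, spread_div _ hτ, div_div] at h
  rwa [pTau_eq_softmax, pTau_eq_softmax, mul_comm 4]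

end Softmax

theorem influence_le_oscillation_div_general {V : Type*} [Fintype V] [Nonempty V]
    (n : ℕ) (s : Fin n → (Fin n → V) → V → ℝ)
    (τ : ℝ) (hτ : 0 < τ) (i j : Fin n) :
    influenceCoeff s τ i j ≤ scoreOscillation s i j / (4 * τ) := by
  have hbdd : BddAbove {d : ℝ | ∃ x y : Fin n → V, (∀ k, k ≠ j → x k = y k) ∧
      d = spread fun a => s i x a - s i y a} :=
    ((Set.finite_range fun xy : (Fin n → V) × (Fin n → V) =>
      spread fun a => s i xy.1 a - s i xy.2 a).subset
        (by rintro _ ⟨x, y, -, rfl⟩; exact ⟨(x, y), rfl⟩)).bddAbove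
  refine csSup_le ⟨_, Classical.arbitrary _, Classical.arbitrary _, fun _ _ => rfl, rfl⟩ ?_
  rintro _ ⟨x, y, hxy, rfl⟩
  exact (tvDist_pTau_le s hτ i x y).trans <|
    div_le_div_of_nonneg_right (le_csSup hbdd ⟨x, y, hxy, rfl⟩) (by positivity)

/-- For all sites `i ≠ j` and all `τ > 0`,
`c_{ij}(τ) ≤ Δ_{ij} / (4τ)`. -/
theorem influence_le_oscillation_div {V : Type*} [Fintype V] [Nonempty V]
    (n : ℕ) (s : Fin n → (Fin n → V) → V → ℝ)
    (hloc : ∀ (i : Fin n) (x y : Fin n → V), (∀ k, k ≠ i → x k = y k) → s i x = s i y)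
    (τ : ℝ) (hτ : 0 < τ) (i j : Fin n) (hij : i ≠ j) :
    influenceCoeff s τ i j ≤ scoreOscillation s i j / (4 * τ) :=
  influence_le_oscillation_div_general n s τ hτ i j
end

section
/- Let B ⊆ X satisfy the uniform local margin condition with margin Δ⋆ > 0, and let μ_τ be a stationary distribution of P_τ with μ_τ(B) > 0. Then the conductance of B satisfies Φ_τ(B) := (Σ_{x∈B} μ_τ(x) P_τ(x, B^c)) / μ_τ(B) ≤ |V| · exp(−Δ⋆/τ). -/
/-!
The bound holds pointwise for every `x ∈ B`. A Glauber step from `x` resamples one site `i`,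
and it leaves `B` only through a token `a` with `x^{(i→a)} ∉ B`. By the margin, the score of such
an `a` trails that of `x i` by at least `Δ⋆`, so its softmax probability is at most
`exp (-Δ⋆/τ)`; there are at most `|V|` such tokens. Averaging over the sites, and then over `x ∈ B`
with weights `μ`, keeps the bound.
-/

open Finset

/-- The Glauber (single-site resampling) kernel on `X = V^n`. -/
noncomputable def glauberKernel {V : Type*} [Fintype V] [DecidableEq V] (n : ℕ)
    (p : Fin n → (Fin n → V) → V → ℝ) (x x' : Fin n → V) : ℝ :=
  (1 / (n : ℝ)) * ∑ i : Fin n, (if ∀ j, j ≠ i → x j = x' j then p i x (x' i) else 0)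

/-- The uniform local margin condition on a basin `B` with margin `Δ⋆`:
for every `x ∈ B` and every site `i` at which some single-site change exits `B`,
`x_i` maximizes `s_i(·; x_{-i})`, and every exit-causing token is beaten by margin `Δ⋆`. -/
def UniformLocalMargin {V : Type*} [Fintype V] [DecidableEq V] {n : ℕ}
    (s : Fin n → (Fin n → V) → V → ℝ) (B : Finset (Fin n → V)) (Δstar : ℝ) : Prop :=
  ∀ x ∈ B, ∀ i : Fin n,
    (∃ a : V, Function.update x i a ∉ B) →
    (∀ b : V, s i x b ≤ s i x (x i)) ∧
    (∀ a : V, a ≠ x i → Function.update x i a ∉ B → Δstar ≤ s i x (x i) - s i x a)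

/-- The softmax denominator is at least the weight of the better token `c`. -/
theorem pTau_le_exp_of_add_le {V : Type*} [Fintype V] {n : ℕ} {s : Fin n → (Fin n → V) → V → ℝ}
    {τ : ℝ} (hτ : 0 < τ) {i : Fin n} {x : Fin n → V} {a c : V} {Δ : ℝ}
    (hgap : s i x a + Δ ≤ s i x c) : pTau s τ i x a ≤ Real.exp (-Δ / τ) := by
  have hc : Real.exp (s i x c / τ) ≤ ∑ b : V, Real.exp (s i x b / τ) :=
    single_le_sum (f := fun b => Real.exp (s i x b / τ)) (fun _ _ => (Real.exp_pos _).le)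
      (mem_univ c)
  rw [pTau, div_le_iff₀ ((Real.exp_pos _).trans_le hc)]
  calc Real.exp (s i x a / τ)
      ≤ Real.exp (-Δ / τ + s i x c / τ) := by
        rw [Real.exp_le_exp, ← add_div]
        exact div_le_div_of_nonneg_right (by linarith) hτ.le
    _ = Real.exp (-Δ / τ) * Real.exp (s i x c / τ) := Real.exp_add _ _
    _ ≤ Real.exp (-Δ / τ) * ∑ b : V, Real.exp (s i x b / τ) :=
        mul_le_mul_of_nonneg_left hc (Real.exp_nonneg _)

section GlauberExit

variable {ι V : Type*} [Fintype ι] [DecidableEq ι] [Fintype V] [DecidableEq V]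

theorem sum_ite_eqOff_eq_sum_update (S : Finset (ι → V)) (x : ι → V) (i : ι)
    [DecidablePred fun x' : ι → V => ∀ j, j ≠ i → x j = x' j] (g : V → ℝ) :
    ∑ x' ∈ S, (if ∀ j, j ≠ i → x j = x' j then g (x' i) else 0)
      = ∑ a ∈ univ.filter (fun a => Function.update x i a ∈ S), g a := by
  rw [← sum_filter]
  refine sum_nbij' (fun x' => x' i) (Function.update x i) (fun x' hx' => ?_) (fun a ha => ?_)
    (fun x' hx' => Function.update_eq_iff.2 ⟨rfl, (mem_filter.1 hx').2⟩)
    (fun a _ => Function.update_self i a x) (fun _ _ => rfl)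
  · obtain ⟨hx'S, hagree⟩ := mem_filter.1 hx'
    rwa [mem_filter, Function.update_eq_iff.2 ⟨rfl, hagree⟩, and_iff_right (mem_univ _)]
  · simp only [mem_filter, mem_univ, true_and] at ha ⊢
    exact ⟨ha, fun j hj => (Function.update_of_ne hj a x).symm⟩

theorem sum_glauberKernel_eq (n : ℕ) (p : Fin n → (Fin n → V) → V → ℝ)
    (S : Finset (Fin n → V)) (x : Fin n → V) :
    ∑ x' ∈ S, glauberKernel n p x x'
      = (1 / (n : ℝ)) * ∑ i, ∑ a ∈ univ.filter (fun a => Function.update x i a ∈ S), p i x a := by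
  simp only [glauberKernel, ← mul_sum]
  rw [sum_comm]
  simp only [sum_ite_eqOff_eq_sum_update]

theorem sum_glauberKernel_le_of_forall_site {n : ℕ} {p : Fin n → (Fin n → V) → V → ℝ}
    {S : Finset (Fin n → V)} {x : Fin n → V} {C : ℝ} (hC : 0 ≤ C)
    (hsite : ∀ i, ∑ a ∈ univ.filter (fun a => Function.update x i a ∈ S), p i x a ≤ C) :
    ∑ x' ∈ S, glauberKernel n p x x' ≤ C := by
  rw [sum_glauberKernel_eq]
  calc (1 / (n : ℝ)) * ∑ i, ∑ a ∈ univ.filter (fun a => Function.update x i a ∈ S), p i x a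
      ≤ (1 / (n : ℝ)) * ∑ _i : Fin n, C :=
        mul_le_mul_of_nonneg_left (sum_le_sum fun i _ => hsite i) (by positivity)
    _ = (1 / (n : ℝ)) * n * C := by simp [mul_assoc]
    _ ≤ C := by
        -- for `n = 0` the kernel is `0` because `1 / 0 = 0`
        rcases n.eq_zero_or_pos with rfl | hn
        · simpa using hC
        · rw [one_div_mul_cancel (by positivity), one_mul]

end GlauberExit

theorem UniformLocalMargin.sum_exit_pTau_le {V : Type*} [Fintype V] [DecidableEq V] {n : ℕ}
    {s : Fin n → (Fin n → V) → V → ℝ} {B : Finset (Fin n → V)} {Δ τ : ℝ}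
    (hmargin : UniformLocalMargin s B Δ) (hτ : 0 < τ) {x : Fin n → V} (hx : x ∈ B) (i : Fin n) :
    ∑ a ∈ univ.filter (fun a => Function.update x i a ∈ univ.filter (fun x' => x' ∉ B)),
        pTau s τ i x a
      ≤ Fintype.card V * Real.exp (-Δ / τ) := by
  refine (sum_le_card_nsmul _ _ (Real.exp (-Δ / τ)) fun a ha => ?_).trans ?_
  · simp only [mem_filter, mem_univ, true_and] at ha
    have hax : a ≠ x i := by
      rintro rfl
      exact ha (by rwa [Function.update_eq_self])
    have hgap := (hmargin x hx i ⟨a, ha⟩).2 a hax ha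
    exact pTau_le_exp_of_add_le hτ (c := x i) (by linarith)
  · rw [nsmul_eq_mul]
    exact mul_le_mul_of_nonneg_right (by exact_mod_cast card_le_univ _) (Real.exp_nonneg _)

theorem weighted_average_le {α : Type*} {B : Finset α} {μ f : α → ℝ} {C : ℝ}
    (hμ : ∀ x, 0 ≤ μ x) (hC : 0 ≤ C) (hf : ∀ x ∈ B, f x ≤ C) :
    (∑ x ∈ B, μ x * f x) / ∑ x ∈ B, μ x ≤ C := by
  refine div_le_of_le_mul₀ (sum_nonneg fun x _ => hμ x) hC ?_
  rw [mul_sum]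
  exact sum_le_sum fun x hx => by
    rw [mul_comm C]; exact mul_le_mul_of_nonneg_left (hf x hx) (hμ x)

theorem conductance_bound_general {V : Type*} [Fintype V] [DecidableEq V]
    (n : ℕ) (s : Fin n → (Fin n → V) → V → ℝ)
    (τ : ℝ) (hτ : 0 < τ)
    (B : Finset (Fin n → V)) (Δstar : ℝ)
    (hmargin : UniformLocalMargin s B Δstar)
    (μ : (Fin n → V) → ℝ)
    (hμ0 : ∀ x, 0 ≤ μ x) :
    (∑ x ∈ B, μ x *
        ∑ x' ∈ Finset.univ.filter (fun x' => x' ∉ B), glauberKernel n (pTau s τ) x x') /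
        (∑ x ∈ B, μ x)
      ≤ (Fintype.card V : ℝ) * Real.exp (-Δstar / τ) := by
  have hC : 0 ≤ (Fintype.card V : ℝ) * Real.exp (-Δstar / τ) := by positivity
  refine weighted_average_le hμ0 hC fun x hx => ?_
  exact sum_glauberKernel_le_of_forall_site hC (hmargin.sum_exit_pTau_le hτ hx)

/-- **conductance bound.** If `B` satisfies the uniform local margin condition
with margin `Δ⋆ > 0` and `μ` is a stationary distribution of `P_τ` with `μ(B) > 0`, then the
conductance of `B` satisfies
`Φ_τ(B) = (Σ_{x∈B} μ(x) P_τ(x,Bᶜ)) / μ(B) ≤ |V|·exp(−Δ⋆/τ)`. -/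
theorem conductance_bound {V : Type*} [Fintype V] [DecidableEq V]
    (n : ℕ) (hn : 0 < n) (s : Fin n → (Fin n → V) → V → ℝ)
    (hloc : ∀ (i : Fin n) (x y : Fin n → V), (∀ k, k ≠ i → x k = y k) → s i x = s i y)
    (τ : ℝ) (hτ : 0 < τ)
    (B : Finset (Fin n → V)) (Δstar : ℝ) (hΔ : 0 < Δstar)
    (hmargin : UniformLocalMargin s B Δstar)
    (μ : (Fin n → V) → ℝ)
    (hμ0 : ∀ x, 0 ≤ μ x) (hμ1 : ∑ x : Fin n → V, μ x = 1)
    (hμstat : ∀ y : Fin n → V,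
      ∑ x : Fin n → V, μ x * glauberKernel n (pTau s τ) x y = μ y)
    (hμB : 0 < ∑ x ∈ B, μ x) :
    (∑ x ∈ B, μ x *
        ∑ x' ∈ Finset.univ.filter (fun x' => x' ∉ B), glauberKernel n (pTau s τ) x x') /
        (∑ x ∈ B, μ x)
      ≤ (Fintype.card V : ℝ) * Real.exp (-Δstar / τ) :=
  conductance_bound_general n s τ hτ B Δstar hmargin μ hμ0
end
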